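/- (Lemma A.1 of the paper.) If W ⊆ V with |W| ≥ 3 can be generated from a connected pair, then there exist X ⊆ V with W ⊆ X and i ∈ W such that D[X] is a directed sub-block, the vertex i is reachable in D[W] from every other vertex of W, and i is reachable in D[X] from every other vertex of X. -/

import Mathlib

/-!
Along the generation chain keep a root `r` of `D[W]` and a superset `X ⊇ W`, also rooted at `r`,
whose underlying graph stays connected after deleting any one vertex. A step adds `k` with an arc
`k → j` and a vertex `u` that reaches both `k` and some `w ∈ W \ {j}` while avoiding `j`. Add to `X`
an inclusion-minimal set `E ∌ j` that still contains such a `u` with its two paths: this is an ear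
from `j` through `k` to `w`. Minimality puts every vertex of `E` on a path to `k` or `w`, so `X ∪ E`
stays rooted at `r`; and it forbids `E \ {v}` a component missing both `k` and `w` (that component
could be cut out), so `X ∪ E` still has no cut vertex.
-/

open Set

variable {V : Type*}

/-- One arc step within the induced subgraph on the vertex set `S`. -/
def StepIn (A : V → V → Prop) (S : Set V) (u v : V) : Prop :=
  u ∈ S ∧ v ∈ S ∧ A u v

/-- `v` is reachable from `u` by a directed path in the induced subgraph on `S`
(every vertex is reachable from itself, provided it lies in `S`). -/
def ReachIn (A : V → V → Prop) (S : Set V) (u v : V) : Prop :=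
  u ∈ S ∧ Relation.ReflTransGen (StepIn A S) u v

/-- `IN(X)`: the set of vertices from which some member of `X` is reachable,
computed in the induced subgraph on `S`. -/
def InSet (A : V → V → Prop) (S : Set V) (X : Set V) : Set V :=
  {u | ∃ x ∈ X, ReachIn A S u x}

/-- `Z` is dynamically partitioning with respect to `X` and `Y`:
`IN(X) ∩ IN(Y) = ∅` computed in the induced subgraph `D − Z`. -/
def DynPart (A : V → V → Prop) (X Y Z : Set V) : Prop :=
  InSet A Zᶜ X ∩ InSet A Zᶜ Y = ∅

/-- `StepsLe r n u v`: `v` can be reached from `u` in at most `n` `r`-steps. -/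
def StepsLe (r : V → V → Prop) : ℕ → V → V → Prop
  | 0, u, v => u = v
  | n + 1, u, v => u = v ∨ ∃ w, r u w ∧ StepsLe r n w v

/-- `v` is reachable from `u` by a directed path using at most `n` arcs
in the induced subgraph on `S`. -/
def ReachInLe (A : V → V → Prop) (S : Set V) (n : ℕ) (u v : V) : Prop :=
  u ∈ S ∧ StepsLe (StepIn A S) n u v

/-- `IN_a(X)` computed in the induced subgraph on `S`. -/
def InSetLe (A : V → V → Prop) (S : Set V) (a : ℕ) (X : Set V) : Set V :=
  {u | ∃ x ∈ X, ReachInLe A S a u x}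

/-- The vertex `i` is cycle-partitioning at order `x` with respect to `X` and `Y`:
`IN_a(X) ∩ IN_b(Y) = ∅` in `D − {i}` for all `a + b = x`. -/
def CyclePart (A : V → V → Prop) (X Y : Set V) (i : V) (x : ℕ) : Prop :=
  ∀ a b : ℕ, a + b = x → InSetLe A {i}ᶜ a X ∩ InSetLe A {i}ᶜ b Y = ∅

/-- One adjacency step of the underlying (simple) graph of `D[W]`. -/
def UStep (A : V → V → Prop) (W : Set V) (u v : V) : Prop :=
  u ∈ W ∧ v ∈ W ∧ u ≠ v ∧ (A u v ∨ A v u)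

/-- The underlying graph of `D[W]` is connected. -/
def UConnected (A : V → V → Prop) (W : Set V) : Prop :=
  W.Nonempty ∧ ∀ u ∈ W, ∀ v ∈ W, Relation.ReflTransGen (UStep A W) u v

/-- The underlying graph of `D[W]` is biconnected: at least 3 vertices, connected,
and deleting any single vertex leaves a connected graph. -/
def Biconnected (A : V → V → Prop) (W : Set V) : Prop :=
  3 ≤ W.ncard ∧ UConnected A W ∧ ∀ v ∈ W, UConnected A (W \ {v})

/-- `D[W]` is a directed sub-block: some vertex of `W` is reachable in `D[W]` from
every other vertex of `W`, and the underlying graph of `D[W]` is biconnected. -/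
def DirectedSubBlock (A : V → V → Prop) (W : Set V) : Prop :=
  (∃ i ∈ W, ∀ j ∈ W, ReachIn A W j i) ∧ Biconnected A W

/-- A directed sub-block is a transmission block iff it is maximal. -/
def TransmissionBlock (A : V → V → Prop) (W : Set V) : Prop :=
  DirectedSubBlock A W ∧ ∀ U : Set V, W ⊂ U → ¬ DirectedSubBlock A U

/-- A connected pair: a two-element set `{i, j}` with an arc between `i` and `j`. -/
def ConnectedPair (A : V → V → Prop) (W : Set V) : Prop :=
  ∃ i j : V, i ≠ j ∧ W = {i, j} ∧ (A i j ∨ A j i)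

/-- `W'` is obtained from `W` by one exact generation step. -/
def ExactStep (A : V → V → Prop) (W W' : Set V) : Prop :=
  ∃ k, k ∉ W ∧ W' = W ∪ {k} ∧ ∃ j ∈ W, A k j ∧ ¬ DynPart A {k} (W \ {j}) {j}

/-- `W` is the last term of a finite chain of exact generation steps whose
first term is a connected pair. -/
def GeneratedFromPair (A : V → V → Prop) (W : Set V) : Prop :=
  ∃ P : Set V, ConnectedPair A P ∧ Relation.ReflTransGen (ExactStep A) P W

/-- `W'` is obtained from `W` by one order-`x` cycle generation step. -/
def CycleStep (A : V → V → Prop) (x : ℕ) (W W' : Set V) : Prop :=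
  ∃ k, k ∉ W ∧ W' = W ∪ {k} ∧ ∃ j ∈ W, A k j ∧ ¬ CyclePart A {k} (W \ {j}) j x

/-- `W` is the last term of a finite chain of order-`x` cycle generation steps
whose first term is a connected pair. -/
def XGenerable (A : V → V → Prop) (x : ℕ) (W : Set V) : Prop :=
  ∃ P : Set V, ConnectedPair A P ∧ Relation.ReflTransGen (CycleStep A x) P W

open Relation

section Reachability

variable {A : V → V → Prop}

lemma StepIn.mono {S T : Set V} (h : S ⊆ T) {u v : V} (hs : StepIn A S u v) : StepIn A T u v :=
  ⟨h hs.1, h hs.2.1, hs.2.2⟩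

lemma ReachIn.mono {S T : Set V} (h : S ⊆ T) {u v : V} (hr : ReachIn A S u v) :
    ReachIn A T u v :=
  ⟨h hr.1, ReflTransGen.mono (fun _ _ => StepIn.mono h) _ _ hr.2⟩

lemma ReachIn.mem_right {S : Set V} {u v : V} (h : ReachIn A S u v) : v ∈ S := by
  obtain ⟨hu, h⟩ := h
  cases h.cases_tail with
  | inl h => exact h ▸ hu
  | inr h => obtain ⟨_, _, hs⟩ := h; exact hs.2.1

lemma reachIn_of_reflTransGen {S : Set V} {u v : V} (h : ReflTransGen (StepIn A S) u v)
    (hv : v ∈ S) : ReachIn A S u v := by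
  refine ⟨?_, h⟩
  cases h.cases_head with
  | inl h => exact h ▸ hv
  | inr h => obtain ⟨_, hs, _⟩ := h; exact hs.1

lemma ReachIn.head {S : Set V} {u v w : V} (hs : StepIn A S u v) (h : ReachIn A S v w) :
    ReachIn A S u w :=
  ⟨hs.1, h.2.head hs⟩

lemma ReachIn.trans {S : Set V} {u v w : V} (h₁ : ReachIn A S u v) (h₂ : ReachIn A S v w) :
    ReachIn A S u w :=
  ⟨h₁.1, h₁.2.trans h₂.2⟩

lemma ReachIn.restrict {S T : Set V} {a b : V} (h : ReachIn A S a b)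
    (hT : ∀ x, ReachIn A S x b → x ∈ T) : ReachIn A T a b := by
  obtain ⟨ha, h⟩ := h
  refine ⟨hT a ⟨ha, h⟩, ?_⟩
  induction h using ReflTransGen.head_induction_on with
  | refl => rfl
  | head hs h ih =>
    exact (ih hs.2.1).head ⟨hT _ ⟨hs.1, h.head hs⟩, hT _ ⟨hs.2.1, h⟩, hs.2.2⟩

instance (S : Set V) : Std.Symm (UStep A S) :=
  ⟨fun _ _ h => ⟨h.2.1, h.1, h.2.2.1.symm, h.2.2.2.symm⟩⟩

lemma UStep.mono {S T : Set V} (h : S ⊆ T) {u v : V} (hs : UStep A S u v) : UStep A T u v :=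
  ⟨h hs.1, h hs.2.1, hs.2.2⟩

lemma reflTransGen_uStep_mono {S T : Set V} (h : S ⊆ T) {u v : V}
    (hr : ReflTransGen (UStep A S) u v) : ReflTransGen (UStep A T) u v :=
  ReflTransGen.mono (fun _ _ => UStep.mono h) _ _ hr

lemma mem_of_reflTransGen_uStep {S : Set V} {u v : V} (h : ReflTransGen (UStep A S) u v)
    (hu : u ∈ S) : v ∈ S := by
  cases h.cases_tail with
  | inl h => exact h ▸ hu
  | inr h => obtain ⟨_, _, hs⟩ := h; exact hs.2.1

lemma reflTransGen_uStep_of_stepIn {S : Set V} {u v : V} (h : ReflTransGen (StepIn A S) u v) :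
    ReflTransGen (UStep A S) u v := by
  induction h with
  | refl => rfl
  | @tail x y _ hs ih =>
    by_cases hxy : x = y
    · exact hxy ▸ ih
    · exact ih.tail ⟨hs.1, hs.2.1, hxy, Or.inl hs.2.2⟩

lemma UConnected.of_forall_reach {S : Set V} {t : V} (ht : t ∈ S)
    (h : ∀ x ∈ S, ReflTransGen (UStep A S) x t) : UConnected A S :=
  ⟨⟨t, ht⟩, fun x hx y hy => (h x hx).trans (symm (h y hy))⟩

/-- If `C` can only be entered or left through `v`, a path ending outside `C` avoids `C` after its
last visit to `v`. -/
lemma reflTransGen_stepIn_sdiff {E C : Set V} {v : V}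
    (hC : ∀ y ∈ C, ∀ z ∈ E, A y z ∨ A z y → z = v ∨ z ∈ C) {a b : V}
    (h : ReflTransGen (StepIn A E) a b) (hb : b ∉ C) :
    (a ∈ C → ReflTransGen (StepIn A (E \ C)) v b) ∧
      (a ∉ C → ReflTransGen (StepIn A (E \ C)) a b) := by
  induction h using ReflTransGen.head_induction_on with
  | refl => exact ⟨fun h => absurd h hb, fun _ => .refl⟩
  | @head a a' hs _ ih =>
    constructor
    · intro ha
      by_cases ha' : a' ∈ C
      · exact ih.1 ha'
      · obtain rfl := (hC a ha a' hs.2.1 (.inl hs.2.2)).resolve_right ha'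
        exact ih.2 ha'
    · intro ha
      by_cases ha' : a' ∈ C
      · obtain rfl := (hC a' ha' a hs.1 (.inr hs.2.2)).resolve_right ha
        exact ih.1 ha'
      · exact (ih.2 ha').head ⟨⟨hs.1, ha⟩, ⟨hs.2.1, ha'⟩, hs.2.2⟩

end Reachability

section Ears

variable {A : V → V → Prop} {B E X : Set V} {r j k w : V}

def IsRootIn (A : V → V → Prop) (X : Set V) (r : V) : Prop :=
  ∀ v ∈ X, ReachIn A X v r

def NoCutVertex (A : V → V → Prop) (X : Set V) : Prop :=
  ∀ v, UConnected A (X \ {v})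

def HasCommonSource (A : V → V → Prop) (E : Set V) (k w : V) : Prop :=
  ∃ u, ReachIn A E u k ∧ ReachIn A E u w

lemma IsRootIn.uConnected (hr : r ∈ X) (h : IsRootIn A X r) : UConnected A X :=
  .of_forall_reach hr fun x hx => reflTransGen_uStep_of_stepIn (h x hx).2

lemma HasCommonSource.left_mem (h : HasCommonSource A E k w) : k ∈ E :=
  h.choose_spec.1.mem_right

lemma HasCommonSource.right_mem (h : HasCommonSource A E k w) : w ∈ E :=
  h.choose_spec.2.mem_right

lemma HasCommonSource.reflTransGen_uStep (h : HasCommonSource A E k w) :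
    ReflTransGen (UStep A E) k w := by
  obtain ⟨u, huk, huw⟩ := h
  exact (symm (reflTransGen_uStep_of_stepIn huk.2)).trans (reflTransGen_uStep_of_stepIn huw.2)

lemma Minimal.reachIn_or_reachIn (hE : Minimal (HasCommonSource A · k w) E) {x : V}
    (hx : x ∈ E) : ReachIn A E x k ∨ ReachIn A E x w := by
  obtain ⟨u, huk, huw⟩ := hE.prop
  have hR : HasCommonSource A {x | ReachIn A E x k ∨ ReachIn A E x w} k w :=
    ⟨u, huk.restrict fun _ => .inl, huw.restrict fun _ => .inr⟩
  exact hE.le_of_le hR (fun _ hy => hy.elim (·.1) (·.1)) hx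

lemma Minimal.reflTransGen_uStep_of_mem_sdiff (hE : Minimal (HasCommonSource A · k w) E)
    (v : V) {x : V} (hx : x ∈ E \ {v}) :
    (k ≠ v ∧ ReflTransGen (UStep A (E \ {v})) x k) ∨
      (w ≠ v ∧ ReflTransGen (UStep A (E \ {v})) x w) := by
  -- Otherwise the component `C` of `x` in `E \ {v}` misses `k` and `w`, and `E \ C` contradicts
  -- minimality.
  by_contra! hcon
  set C := {y | ReflTransGen (UStep A (E \ {v})) x y}
  have hnot : ∀ y, (y ≠ v → ¬ ReflTransGen (UStep A (E \ {v})) x y) → y ∉ C := fun y hy hyC =>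
    hy (mem_of_reflTransGen_uStep hyC hx).2 hyC
  have hk : k ∉ C := hnot k hcon.1
  have hw : w ∉ C := hnot w hcon.2
  have hclosed : ∀ y ∈ C, ∀ z ∈ E, A y z ∨ A z y → z = v ∨ z ∈ C := by
    intro y hy z hz hyz
    by_cases hzv : z = v
    · exact .inl hzv
    by_cases hyz' : y = z
    · exact .inr (hyz' ▸ hy)
    exact .inr (hy.tail ⟨mem_of_reflTransGen_uStep hy hx, ⟨hz, hzv⟩, hyz', hyz⟩)
  have hsrc : HasCommonSource A (E \ C) k w := by
    obtain ⟨u, huk, huw⟩ := hE.prop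
    have hk' := reflTransGen_stepIn_sdiff hclosed huk.2 hk
    have hw' := reflTransGen_stepIn_sdiff hclosed huw.2 hw
    by_cases hu : u ∈ C
    · exact ⟨v, reachIn_of_reflTransGen (hk'.1 hu) ⟨huk.mem_right, hk⟩,
        reachIn_of_reflTransGen (hw'.1 hu) ⟨huw.mem_right, hw⟩⟩
    · exact ⟨u, ⟨⟨huk.1, hu⟩, hk'.2 hu⟩, ⟨⟨huw.1, hu⟩, hw'.2 hu⟩⟩
  exact (hE.le_of_le hsrc sdiff_subset hx.1).2 (ReflTransGen.refl : x ∈ C)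

lemma IsRootIn.union_ear (hB : IsRootIn A B r) (hj : j ∈ B) (hw : w ∈ B) (hkj : A k j)
    (hE : Minimal (HasCommonSource A · k w) E) : IsRootIn A (B ∪ E) r := by
  rintro x (hxB | hxE)
  · exact (hB x hxB).mono subset_union_left
  rcases hE.reachIn_or_reachIn hxE with hxk | hxw
  · exact (hxk.mono subset_union_right).trans
      (ReachIn.head ⟨.inr hxk.mem_right, .inl hj, hkj⟩ ((hB j hj).mono subset_union_left))
  · exact (hxw.mono subset_union_right).trans ((hB w hw).mono subset_union_left)

lemma NoCutVertex.union_ear (hB : NoCutVertex A B) (hj : j ∈ B) (hw : w ∈ B) (hjE : j ∉ E)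
    (hkj : A k j) (hE : Minimal (HasCommonSource A · k w) E) : NoCutVertex A (B ∪ E) := by
  intro v
  obtain ⟨⟨t, ht⟩, hBv⟩ := hB v
  have hBsub : B \ {v} ⊆ (B ∪ E) \ {v} := sdiff_subset_sdiff_left subset_union_left
  have hEsub : E \ {v} ⊆ (B ∪ E) \ {v} := sdiff_subset_sdiff_left subset_union_right
  have htoB : ∀ y ∈ B \ {v}, ReflTransGen (UStep A ((B ∪ E) \ {v})) y t := fun y hy =>
    reflTransGen_uStep_mono hBsub (hBv y hy t ht)
  refine .of_forall_reach (hBsub ht) ?_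
  rintro x ⟨hxB | hxE, hxv⟩
  · exact htoB x ⟨hxB, hxv⟩
  rcases hE.reflTransGen_uStep_of_mem_sdiff v ⟨hxE, hxv⟩ with ⟨hkv, hxk⟩ | ⟨hwv, hxw⟩
  · by_cases hjv : j = v
    · subst hjv
      have hkw := reflTransGen_uStep_mono (show E ⊆ (B ∪ E) \ {j} from
        fun y hy => ⟨.inr hy, fun h => hjE (h ▸ hy)⟩) hE.prop.reflTransGen_uStep
      refine (reflTransGen_uStep_mono hEsub hxk).trans (hkw.trans (htoB w ⟨hw, ?_⟩))
      exact fun h => hjE (h ▸ hE.prop.right_mem)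
    · have hkE := hE.prop.left_mem
      have hkj' : UStep A ((B ∪ E) \ {v}) k j :=
        ⟨⟨.inr hkE, hkv⟩, ⟨.inl hj, hjv⟩, fun h => hjE (h ▸ hkE), .inl hkj⟩
      exact ((reflTransGen_uStep_mono hEsub hxk).tail hkj').trans (htoB j ⟨hj, hjv⟩)
  · exact (reflTransGen_uStep_mono hEsub hxw).trans (htoB w ⟨hw, hwv⟩)

end Ears

section Generation

variable {A : V → V → Prop}

def HasRootedCover (A : V → V → Prop) (W : Set V) : Prop :=
  ∃ r ∈ W, IsRootIn A W r ∧ ∃ X, W ⊆ X ∧ IsRootIn A X r ∧ NoCutVertex A X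

lemma IsRootIn.union_singleton {W : Set V} {r j k : V} (hW : IsRootIn A W r) (hj : j ∈ W)
    (hkj : A k j) : IsRootIn A (W ∪ {k}) r := by
  rintro x (hx | rfl)
  · exact (hW x hx).mono subset_union_left
  · exact ReachIn.head ⟨.inr rfl, .inl hj, hkj⟩ ((hW j hj).mono subset_union_left)

lemma hasRootedCover_pair {i j : V} (hij : i ≠ j) (h : A i j) : HasRootedCover A {i, j} := by
  have hroot : IsRootIn A {i, j} j := by
    rintro x (rfl | rfl)
    · exact ⟨.inl rfl, .single ⟨.inl rfl, .inr rfl, h⟩⟩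
    · exact ⟨.inr rfl, .refl⟩
  refine ⟨j, .inr rfl, hroot, {i, j}, subset_rfl, hroot, fun v => ⟨?_, ?_⟩⟩
  · by_cases hv : v = i
    · exact ⟨j, .inr rfl, by simp [hv, hij.symm]⟩
    · exact ⟨i, .inl rfl, by simp [Ne.symm hv]⟩
  · rintro x ⟨hx, hxv⟩ y ⟨hy, hyv⟩
    by_cases hxy : x = y
    · exact hxy ▸ .refl
    refine .single ⟨⟨hx, hxv⟩, ⟨hy, hyv⟩, hxy, ?_⟩
    rcases hx with rfl | rfl <;> rcases hy with rfl | rfl <;> tauto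

lemma ConnectedPair.hasRootedCover {P : Set V} (hP : ConnectedPair A P) : HasRootedCover A P := by
  obtain ⟨i, j, hij, rfl, hij' | hji⟩ := hP
  · exact hasRootedCover_pair hij hij'
  · exact pair_comm i j ▸ hasRootedCover_pair hij.symm hji

lemma exists_hasCommonSource_of_not_dynPart {Y : Set V} {j k : V}
    (h : ¬ DynPart A {k} Y {j}) : ∃ w ∈ Y, HasCommonSource A {j}ᶜ k w := by
  obtain ⟨u, ⟨_, rfl, huk⟩, w, hw, huw⟩ := Set.nonempty_iff_ne_empty.mpr h
  exact ⟨w, hw, u, huk, huw⟩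

lemma HasRootedCover.of_exactStep [Finite V] {W W' : Set V} (hW : HasRootedCover A W)
    (hstep : ExactStep A W W') : HasRootedCover A W' := by
  obtain ⟨r, hrW, hrootW, X, hWX, hrootX, hX⟩ := hW
  obtain ⟨k, -, rfl, j, hjW, hkj, hdyn⟩ := hstep
  obtain ⟨w, ⟨hwW, -⟩, hsrc⟩ := exists_hasCommonSource_of_not_dynPart hdyn
  obtain ⟨E, hEj, hE⟩ := exists_minimal_le_of_wellFoundedLT (HasCommonSource A · k w) _ hsrc
  refine ⟨r, .inl hrW, hrootW.union_singleton hjW hkj, X ∪ E,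
    union_subset_union hWX (singleton_subset_iff.mpr hE.prop.left_mem),
    hrootX.union_ear (hWX hjW) (hWX hwW) hkj hE,
    hX.union_ear (hWX hjW) (hWX hwW) (fun h => hEj h rfl) hkj hE⟩

lemma GeneratedFromPair.hasRootedCover [Finite V] {W : Set V} (h : GeneratedFromPair A W) :
    HasRootedCover A W := by
  obtain ⟨P, hP, hchain⟩ := h
  induction hchain with
  | refl => exact hP.hasRootedCover
  | tail _ hstep ih => exact ih.of_exactStep hstep

end Generation

theorem stmt7_general [Fintype V] (A : V → V → Prop)
    (W : Set V) (hWcard : 3 ≤ W.ncard) (hgen : GeneratedFromPair A W) :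
    ∃ X : Set V, W ⊆ X ∧ ∃ i ∈ W, DirectedSubBlock A X ∧
      (∀ v ∈ W, ReachIn A W v i) ∧ (∀ v ∈ X, ReachIn A X v i) := by
  obtain ⟨r, hrW, hrootW, X, hWX, hrootX, hX⟩ := hgen.hasRootedCover
  refine ⟨X, hWX, r, hrW, ⟨⟨r, hWX hrW, hrootX⟩, ?_, hrootX.uConnected (hWX hrW),
    fun v _ => hX v⟩, hrootW, hrootX⟩
  exact hWcard.trans (ncard_le_ncard hWX (toFinite X))

/-- Lemma A.1. -/
theorem stmt7 [Fintype V] (A : V → V → Prop) (hirr : ∀ v : V, ¬ A v v)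
    (W : Set V) (hWcard : 3 ≤ W.ncard) (hgen : GeneratedFromPair A W) :
    ∃ X : Set V, W ⊆ X ∧ ∃ i ∈ W, DirectedSubBlock A X ∧
      (∀ v ∈ W, ReachIn A W v i) ∧ (∀ v ∈ X, ReachIn A X v i) :=
  stmt7_general A W hWcard hgen
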